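/- arXiv:2410.00611 — 2 statements merged into one kernel-verified Lean document; each statement's English description precedes it below -/
import Mathlib

section
/- Let p be a prime, n, m positive integers, and F : 𝔽_p^n → 𝔽_p^m a surjective, almost balanced, plateaued function. Then there exists t ≥ 0 such that n + t is even, every nonzero component of F is t-plateaued (i.e., F is plateaued with single amplitude p^{(n+t)/2}), and m ≤ (n + t)/2. -/
open Finset

/-- The Walsh transform of `F : 𝔽_p^n → 𝔽_p^m` at `(b, a)`. -/
noncomputable def walsh (p n m : ℕ) [NeZero p] (F : (Fin n → ZMod p) → (Fin m → ZMod p))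
    (b : Fin m → ZMod p) (a : Fin n → ZMod p) : ℂ :=
  ∑ x : Fin n → ZMod p,
    Complex.exp (2 * Real.pi * Complex.I *
      ((((∑ i, b i * F x i) - ∑ i, a i * x i).val : ℤ) : ℂ) / p)

/-- The imbalance `Nb_F = p^{-m} ∑_{b ≠ 0} |W_F(b,0)|²`. -/
noncomputable def imbalance (p n m : ℕ) [NeZero p]
    (F : (Fin n → ZMod p) → (Fin m → ZMod p)) : ℝ :=
  ((p : ℝ) ^ m)⁻¹ *
    ∑ b ∈ univ.filter (fun b : Fin m → ZMod p => b ≠ 0),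
      ‖walsh p n m F b 0‖ ^ 2

/-- The size of the preimage set `F⁻¹(β)`. -/
def fiberCard (p n m : ℕ) [NeZero p] (F : (Fin n → ZMod p) → (Fin m → ZMod p))
    (β : Fin m → ZMod p) : ℕ :=
  (univ.filter fun x => F x = β).card

/-- The size of the image set of `F`. -/
def imSize (p n m : ℕ) [NeZero p] (F : (Fin n → ZMod p) → (Fin m → ZMod p)) : ℕ :=
  (univ.image F).card

/-- The imbalance defect
`Ξ(F) = sqrt((|im F| - 1)(|im F|·Nb_F - p^{2n-m}(p^m - |im F|)))/|im F|`. -/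
noncomputable def xi (p n m : ℕ) [NeZero p]
    (F : (Fin n → ZMod p) → (Fin m → ZMod p)) : ℝ :=
  Real.sqrt (((imSize p n m F : ℝ) - 1) *
      ((imSize p n m F : ℝ) * imbalance p n m F -
        (p : ℝ) ^ (2 * (n : ℤ) - (m : ℤ)) * ((p : ℝ) ^ m - (imSize p n m F : ℝ)))) /
    (imSize p n m F : ℝ)

/-- The component `F_b` is `t`-plateaued: `|W_F(b,a)| ∈ {0, p^{(n+t)/2}}` for all `a`. -/
def IsTPlateaued (p n m : ℕ) [NeZero p] (F : (Fin n → ZMod p) → (Fin m → ZMod p))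
    (b : Fin m → ZMod p) (t : ℕ) : Prop :=
  ∀ a : Fin n → ZMod p,
    ‖walsh p n m F b a‖ = 0 ∨
    ‖walsh p n m F b a‖ = Real.sqrt ((p : ℝ) ^ (n + t))

/-- `F` is plateaued: every nonzero component is `t_b`-plateaued for some `t_b`. -/
def IsPlateaued (p n m : ℕ) [NeZero p] (F : (Fin n → ZMod p) → (Fin m → ZMod p)) : Prop :=
  ∀ b : Fin m → ZMod p, b ≠ 0 → ∃ t : ℕ, IsTPlateaued p n m F b t

/-- `F` (with nonzero imbalance defect) is almost balanced: some preimage set size attains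
`p^n/|im F| ± Ξ(F)`. -/
def IsAlmostBalanced (p n m : ℕ) [NeZero p]
    (F : (Fin n → ZMod p) → (Fin m → ZMod p)) : Prop :=
  xi p n m F ≠ 0 ∧
  ∃ β : Fin m → ZMod p,
    (fiberCard p n m F β : ℝ) = (p : ℝ) ^ n / (imSize p n m F : ℝ) + xi p n m F ∨
    (fiberCard p n m F β : ℝ) = (p : ℝ) ^ n / (imSize p n m F : ℝ) - xi p n m F

/-!
Surjectivity gives `|im F| = p^m`, so `Ξ(F)² = (1 - p^{-m}) Nb_F`, and Parseval identifies `Nb_F`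
with the variance `∑_β δ_β²` of the fibre sizes, `δ_β = |F⁻¹(β)| - p^{n-m}`. A fibre `β₀` with
`δ_{β₀} = ±Ξ(F)` is the equality case of Cauchy–Schwarz for the remaining `δ_β` (which sum to
`-δ_{β₀}`), so all other fibres have the same size. Hence every `W_F(b,0)`, `b ≠ 0`, has the same
nonzero modulus `|D| / (p^m - 1)`, where `D = p^m |F⁻¹(β₀)| - p^n`. Plateauedness turns this into
`D² = (p^m - 1)² p^{n+t}` with a single `t`, which forces `n + t` to be even and
`|D| = (p^m - 1) p^{(n+t)/2}`; as `p^m ∣ D` and `p^m` is coprime to `p^m - 1`, `m ≤ (n+t)/2`.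
-/

theorem AddChar.map_sum_eq_prod {A M ι : Type*} [AddCommMonoid A] [CommMonoid M]
    (ψ : AddChar A M) (s : Finset ι) (f : ι → A) : ψ (∑ i ∈ s, f i) = ∏ i ∈ s, ψ (f i) := by
  induction s using Finset.cons_induction with
  | empty => simp
  | cons a s ha ih => rw [sum_cons, prod_cons, AddChar.map_add_eq_mul, ih]

open ZMod

section Characters

variable {N : ℕ} [NeZero N] {ι : Type*} [Fintype ι] [DecidableEq ι]

theorem sum_stdAddChar_dotProduct (v : ι → ZMod N) :
    ∑ w : ι → ZMod N, stdAddChar (w ⬝ᵥ v) = if v = 0 then (N : ℂ) ^ Fintype.card ι else 0 := by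
  simp only [dotProduct, AddChar.map_sum_eq_prod]
  rw [← Fintype.prod_sum (fun i z => stdAddChar (z * v i))]
  simp only [AddChar.sum_mulShift _ (isPrimitive_stdAddChar N), ZMod.card, Nat.cast_ite,
    Nat.cast_zero, Fintype.prod_ite_zero, prod_const, card_univ, funext_iff, Pi.zero_apply]

theorem sum_add_const_mul_stdAddChar_dotProduct {b : ι → ZMod N} (hb : b ≠ 0)
    (g : (ι → ZMod N) → ℂ) (r : ℂ) :
    ∑ β, (g β + r) * stdAddChar (b ⬝ᵥ β) = ∑ β, g β * stdAddChar (b ⬝ᵥ β) := by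
  simp_rw [add_mul, sum_add_distrib, ← mul_sum, dotProduct_comm b,
    sum_stdAddChar_dotProduct, if_neg hb, mul_zero, add_zero]

theorem sum_sq_norm_sum_mul_stdAddChar_dotProduct (g : (ι → ZMod N) → ℝ) :
    ∑ b : ι → ZMod N, ‖∑ β, (g β : ℂ) * stdAddChar (b ⬝ᵥ β)‖ ^ 2 =
      (N : ℝ) ^ Fintype.card ι * ∑ β, g β ^ 2 := by
  have expand (b : ι → ZMod N) : ((‖∑ β, (g β : ℂ) * stdAddChar (b ⬝ᵥ β)‖ ^ 2 : ℝ) : ℂ) =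
      ∑ β, ∑ γ, (g β * g γ : ℝ) * stdAddChar (b ⬝ᵥ (β - γ)) := by
    rw [Complex.ofReal_pow, ← Complex.mul_conj', map_sum, sum_mul_sum]
    refine sum_congr rfl fun β _ => sum_congr rfl fun γ _ => ?_
    rw [map_mul, Complex.conj_ofReal, ← AddChar.map_neg_eq_conj, dotProduct_sub,
      sub_eq_add_neg, AddChar.map_add_eq_mul]
    push_cast; ring
  apply Complex.ofReal_injective
  push_cast [expand]
  rw [sum_comm]
  refine (sum_congr rfl fun β _ => ?_).trans (mul_sum _ _ _).symm
  rw [sum_comm]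
  simp_rw [← mul_sum, sum_stdAddChar_dotProduct, sub_eq_zero,
    mul_ite, mul_zero, sum_ite_eq, if_pos (mem_univ _)]
  ring
end Characters

section Walsh

variable {p n m : ℕ} [NeZero p] (F : (Fin n → ZMod p) → (Fin m → ZMod p))

theorem walsh_eq_sum_stdAddChar (b : Fin m → ZMod p) (a : Fin n → ZMod p) :
    walsh p n m F b a = ∑ x, stdAddChar (b ⬝ᵥ F x - a ⬝ᵥ x) := by
  simp [walsh, stdAddChar_apply, toCircle_apply, dotProduct]

theorem walsh_zero_eq_sum_fiberCard (b : Fin m → ZMod p) :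
    walsh p n m F b 0 = ∑ β, (fiberCard p n m F β : ℂ) * stdAddChar (b ⬝ᵥ β) := by
  simp_rw [walsh_eq_sum_stdAddChar, zero_dotProduct, sub_zero]
  rw [← sum_fiberwise' univ F (fun β => stdAddChar (b ⬝ᵥ β))]
  simp [fiberCard]

theorem sum_fiberCard : ∑ β, fiberCard p n m F β = p ^ n := by
  have := card_eq_sum_card_fiberwise (s := univ) (t := univ) (f := F) (by simp)
  simpa [fiberCard] using this.symm

theorem sum_fiberCard_sub_eq_zero :
    ∑ β, ((fiberCard p n m F β : ℝ) - (p : ℝ) ^ n / (p : ℝ) ^ m) = 0 := by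
  have hp : (p : ℝ) ^ m ≠ 0 := pow_ne_zero _ (Nat.cast_ne_zero.2 (NeZero.ne p))
  rw [sum_sub_distrib, ← Nat.cast_sum, sum_fiberCard]
  simp [ZMod.card, mul_div_cancel₀ _ hp]

theorem walsh_zero_eq_sum_fiberCard_sub {b : Fin m → ZMod p} (hb : b ≠ 0) (r : ℝ) :
    walsh p n m F b 0 = ∑ β, (((fiberCard p n m F β : ℝ) - r : ℝ) : ℂ) * stdAddChar (b ⬝ᵥ β) := by
  rw [walsh_zero_eq_sum_fiberCard, ← sum_add_const_mul_stdAddChar_dotProduct hb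
    (fun β => (((fiberCard p n m F β : ℝ) - r : ℝ) : ℂ)) r]
  simp only [Complex.ofReal_sub, Complex.ofReal_natCast, sub_add_cancel]

theorem imbalance_eq_sum_sq :
    imbalance p n m F = ∑ β, ((fiberCard p n m F β : ℝ) - (p : ℝ) ^ n / (p : ℝ) ^ m) ^ 2 := by
  set δ : (Fin m → ZMod p) → ℝ := fun β => (fiberCard p n m F β : ℝ) - (p : ℝ) ^ n / (p : ℝ) ^ m
  have hp : (p : ℝ) ^ m ≠ 0 := pow_ne_zero _ (Nat.cast_ne_zero.2 (NeZero.ne p))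
  have hwalsh (b : Fin m → ZMod p) (hb : b ∈ univ.erase 0) :
      ‖walsh p n m F b 0‖ ^ 2 = ‖∑ β, (δ β : ℂ) * stdAddChar (b ⬝ᵥ β)‖ ^ 2 := by
    rw [walsh_zero_eq_sum_fiberCard_sub F (ne_of_mem_erase hb)]
  have hzero : ∑ β, (δ β : ℂ) * stdAddChar ((0 : Fin m → ZMod p) ⬝ᵥ β) = 0 := by
    simp only [zero_dotProduct, AddChar.map_zero_eq_one, mul_one, δ]
    exact_mod_cast sum_fiberCard_sub_eq_zero F
  rw [imbalance, filter_ne', sum_congr rfl hwalsh,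
    sum_erase _ (by rw [hzero, norm_zero, sq, zero_mul]), sum_sq_norm_sum_mul_stdAddChar_dotProduct,
    Fintype.card_fin, inv_mul_cancel_left₀ hp]

end Walsh

/-- Equality case of Cauchy–Schwarz: given `hsum`, the sum
`∑_{j ≠ i₀} (δ j * (card ι - 1) + δ i₀)²` equals
`(card ι - 1) * ((card ι - 1) * ∑ i, δ i ^ 2 - card ι * δ i₀ ^ 2)`, which `h` makes zero. -/
theorem mul_card_sub_one_eq_neg_of_sq_mul_card_eq {ι : Type*} [Fintype ι] [DecidableEq ι]
    {δ : ι → ℝ} (hsum : ∑ i, δ i = 0) {i₀ : ι}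
    (h : δ i₀ ^ 2 * Fintype.card ι = (Fintype.card ι - 1) * ∑ i, δ i ^ 2) {i : ι} (hi : i ≠ i₀) :
    δ i * (Fintype.card ι - 1) = -δ i₀ := by
  set Q : ℝ := (Fintype.card ι : ℝ)
  have hcard : ((univ.erase i₀).card : ℝ) = Q - 1 := by
    rw [card_erase_of_mem (mem_univ _), card_univ, Nat.cast_pred (Fintype.card_pos_iff.2 ⟨i₀⟩)]
  have hzero : ∑ j ∈ univ.erase i₀, (δ j * (Q - 1) + δ i₀) ^ 2 = 0 := by
    have hsum' : ∑ j ∈ univ.erase i₀, δ j = -δ i₀ := by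
      rw [eq_neg_iff_add_eq_zero, add_comm, add_sum_erase _ _ (mem_univ i₀), hsum]
    have hsq' : ∑ j ∈ univ.erase i₀, δ j ^ 2 = ∑ j, δ j ^ 2 - δ i₀ ^ 2 := by
      rw [← add_sum_erase _ _ (mem_univ i₀), add_sub_cancel_left]
    simp only [add_sq, mul_pow, sum_add_distrib, ← sum_mul, ← mul_sum, sum_const, nsmul_eq_mul,
      hcard, hsum', hsq']
    linear_combination (1 - Q) * h
  have hi' := (sum_eq_zero_iff_of_nonneg fun j _ => sq_nonneg _).1 hzero i
    (mem_erase.2 ⟨hi, mem_univ _⟩)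
  linear_combination pow_eq_zero_iff two_ne_zero |>.1 hi'

section AlmostBalanced

variable {p n m : ℕ} [NeZero p] {F : (Fin n → ZMod p) → (Fin m → ZMod p)}

theorem walsh_zero_mul_sub_one_eq {b : Fin m → ZMod p} (hb : b ≠ 0) {β₀ : Fin m → ZMod p}
    {q r : ℝ}
    (h : ∀ β ≠ β₀, ((fiberCard p n m F β : ℝ) - r) * (q - 1) = -(fiberCard p n m F β₀ - r)) :
    walsh p n m F b 0 * (q - 1) =
      ((q * (fiberCard p n m F β₀ - r) : ℝ) : ℂ) * stdAddChar (b ⬝ᵥ β₀) := by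
  set c : (Fin m → ZMod p) → ℝ := fun β => fiberCard p n m F β
  calc walsh p n m F b 0 * (q - 1)
      = ∑ β, ((((c β - r) * (q - 1) + (c β₀ - r) : ℝ) : ℂ) + ((r * (q - 1) - (c β₀ - r) : ℝ) : ℂ)) *
          stdAddChar (b ⬝ᵥ β) := by
        rw [walsh_zero_eq_sum_fiberCard, sum_mul]
        refine sum_congr rfl fun β _ => ?_
        push_cast [c]
        ring
    _ = ∑ β, (((c β - r) * (q - 1) + (c β₀ - r) : ℝ) : ℂ) * stdAddChar (b ⬝ᵥ β) :=
        sum_add_const_mul_stdAddChar_dotProduct hb _ _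
    _ = _ := by
        rw [sum_eq_single β₀ (fun β _ hβ => by simp [c, h β hβ]) (by simp)]
        push_cast [c]
        ring

theorem imSize_eq_of_surjective (hF : Function.Surjective F) : imSize p n m F = p ^ m := by
  simp [imSize, image_univ_of_surjective hF, ZMod.card]

theorem imSize_ne_one_of_xi_ne_zero (h : xi p n m F ≠ 0) : imSize p n m F ≠ 1 := by
  intro h1
  simp [xi, h1] at h

theorem xi_sq_mul_of_surjective (hF : Function.Surjective F) :
    xi p n m F ^ 2 * (p : ℝ) ^ m = ((p : ℝ) ^ m - 1) * imbalance p n m F := by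
  have hp : (1 : ℝ) ≤ (p : ℝ) ^ m := one_le_pow₀ (Nat.one_le_cast.2 (NeZero.one_le))
  have hNb : 0 ≤ imbalance p n m F := by
    rw [imbalance_eq_sum_sq]
    positivity
  rw [xi, imSize_eq_of_surjective hF, Nat.cast_pow, sub_self, mul_zero, sub_zero, div_pow,
    Real.sq_sqrt (mul_nonneg (sub_nonneg.2 hp) (mul_nonneg (by positivity) hNb))]
  field_simp

theorem IsAlmostBalanced.exists_norm_walsh_zero_mul (hF : Function.Surjective F)
    (hab : IsAlmostBalanced p n m F) :
    ∃ β₀, (fiberCard p n m F β₀ : ℝ) ≠ (p : ℝ) ^ n / (p : ℝ) ^ m ∧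
      ∀ b ≠ 0, ‖walsh p n m F b 0‖ * ((p : ℝ) ^ m - 1) =
        (p : ℝ) ^ m * |(fiberCard p n m F β₀ : ℝ) - (p : ℝ) ^ n / (p : ℝ) ^ m| := by
  obtain ⟨hxi, β₀, hβ₀⟩ := hab
  set r : ℝ := (p : ℝ) ^ n / (p : ℝ) ^ m
  have hδ₀ : ((fiberCard p n m F β₀ : ℝ) - r) ^ 2 = xi p n m F ^ 2 := by
    rw [imSize_eq_of_surjective hF, Nat.cast_pow] at hβ₀
    rcases hβ₀ with h | h <;> rw [h] <;> ring
  have hcard : (Fintype.card (Fin m → ZMod p) : ℝ) = (p : ℝ) ^ m := by simp [ZMod.card]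
  have hsq : ((fiberCard p n m F β₀ : ℝ) - r) ^ 2 * Fintype.card (Fin m → ZMod p) =
      (Fintype.card (Fin m → ZMod p) - 1) * ∑ β, ((fiberCard p n m F β : ℝ) - r) ^ 2 := by
    rw [hcard, hδ₀, xi_sq_mul_of_surjective hF, imbalance_eq_sum_sq]
  refine ⟨β₀, fun h => hxi ?_, fun b hb => ?_⟩
  · rwa [h, sub_self, sq, zero_mul, eq_comm, sq_eq_zero_iff] at hδ₀
  have hW := congrArg norm <| walsh_zero_mul_sub_one_eq hb (q := (p : ℝ) ^ m) fun β hβ => by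
    simpa only [hcard] using
      mul_card_sub_one_eq_neg_of_sq_mul_card_eq (sum_fiberCard_sub_eq_zero F) hsq hβ
  have hp : (1 : ℝ) ≤ (p : ℝ) ^ m := one_le_pow₀ (Nat.one_le_cast.2 (NeZero.one_le))
  have hq : ‖Complex.ofReal ((p : ℝ) ^ m) - 1‖ = (p : ℝ) ^ m - 1 := by
    rw [← Complex.ofReal_one, ← Complex.ofReal_sub, Complex.norm_of_nonneg (sub_nonneg.2 hp)]
  rwa [norm_mul, norm_mul, AddChar.norm_apply, mul_one, Complex.norm_real, Real.norm_eq_abs,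
    abs_mul, abs_of_nonneg (zero_le_one.trans hp), hq] at hW

theorem IsAlmostBalanced.exists_nat_norm_walsh_zero_mul (hp : 1 < p)
    (hF : Function.Surjective F) (hab : IsAlmostBalanced p n m F) :
    ∃ d : ℕ, d ≠ 0 ∧ p ^ m ∣ d ∧
      ∀ b ≠ 0, ‖walsh p n m F b 0‖ * ((p ^ m - 1 : ℕ) : ℝ) = d := by
  obtain ⟨β₀, hβ₀, hW⟩ := hab.exists_norm_walsh_zero_mul hF
  have hmn : m ≤ n := by
    have := Fintype.card_le_of_surjective F hF
    rwa [Fintype.card_fun, Fintype.card_fun, ZMod.card, Fintype.card_fin, Fintype.card_fin,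
      Nat.pow_le_pow_iff_right hp] at this
  have hpm : (0 : ℝ) < (p : ℝ) ^ m := by positivity
  set D : ℤ := p ^ m * fiberCard p n m F β₀ - p ^ n
  have hD : (D : ℝ) = (p : ℝ) ^ m * ((fiberCard p n m F β₀ : ℝ) - (p : ℝ) ^ n / (p : ℝ) ^ m) := by
    push_cast [D]
    field_simp
  refine ⟨D.natAbs, ?_, ?_, fun b hb => ?_⟩
  · rw [Int.natAbs_ne_zero]
    rintro h
    rw [h, Int.cast_zero, eq_comm, mul_eq_zero, sub_eq_zero] at hD
    exact hD.elim hpm.ne' hβ₀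
  · rw [← Int.ofNat_dvd_left]
    push_cast [D]
    exact dvd_sub (dvd_mul_right _ _) (pow_dvd_pow _ hmn)
  · rw [Nat.cast_sub (Nat.one_le_pow _ _ (by omega)), Nat.cast_pow, Nat.cast_one, hW b hb]
    simp [hD, abs_mul, abs_of_pos hpm]

theorem IsTPlateaued.sq_norm_walsh {b : Fin m → ZMod p} {t : ℕ}
    (h : IsTPlateaued p n m F b t) {a : Fin n → ZMod p} (ha : walsh p n m F b a ≠ 0) :
    ‖walsh p n m F b a‖ ^ 2 = (p : ℝ) ^ (n + t) := by
  rcases h a with h | h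
  · exact absurd (norm_eq_zero.1 h) ha
  · rw [h, Real.sq_sqrt (by positivity)]

end AlmostBalanced

theorem Nat.Prime.even_and_eq_mul_pow_half_of_sq_eq {p k d u : ℕ} (hp : p.Prime) (hu : u ≠ 0)
    (h : d ^ 2 = u ^ 2 * p ^ k) : Even k ∧ d = u * p ^ (k / 2) := by
  have : Fact p.Prime := ⟨hp⟩
  have hd : d ≠ 0 := by
    rintro rfl
    simp [hu, hp.ne_zero] at h
  have hv := congrArg (padicValNat p) h
  rw [padicValNat.pow _ _, padicValNat.mul (pow_ne_zero _ hu) (pow_ne_zero _ hp.ne_zero),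
    padicValNat.pow, padicValNat.prime_pow] at hv
  have hk : Even k := ⟨padicValNat p d - padicValNat p u, by omega⟩
  refine ⟨hk, Nat.pow_left_injective two_ne_zero ?_⟩
  simp only [h, mul_pow, ← pow_mul, Nat.div_mul_cancel (even_iff_two_dvd.1 hk)]

theorem Nat.le_of_pow_dvd_pow_sub_one_mul_pow {p m j : ℕ} (hp : 1 < p)
    (h : p ^ m ∣ (p ^ m - 1) * p ^ j) : m ≤ j := by
  have hcop : Nat.Coprime (p ^ m) (p ^ m - 1) :=
    (Nat.coprime_self_sub_right (Nat.one_le_pow _ _ (by omega))).2 (Nat.coprime_one_right _)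
  exact (Nat.pow_dvd_pow_iff_le_right hp).1 (hcop.dvd_of_dvd_mul_left h)

theorem almostBalanced_plateaued_single_amplitude_general (p n m : ℕ) [NeZero p] (hp : p.Prime)
    (F : (Fin n → ZMod p) → (Fin m → ZMod p))
    (hsurj : Function.Surjective F)
    (hab : IsAlmostBalanced p n m F)
    (hplat : IsPlateaued p n m F) :
    ∃ t : ℕ, Even (n + t) ∧ (∀ b : Fin m → ZMod p, b ≠ 0 → IsTPlateaued p n m F b t) ∧
      m ≤ (n + t) / 2 := by
  obtain ⟨d, hd, hdvd, hW⟩ := hab.exists_nat_norm_walsh_zero_mul hp.one_lt hsurj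
  have hm : m ≠ 0 := by
    rintro rfl
    exact imSize_ne_one_of_xi_ne_zero hab.1 (by simp [imSize_eq_of_surjective hsurj])
  have hu : p ^ m - 1 ≠ 0 := by
    have := Nat.one_lt_pow hm hp.one_lt
    omega
  have hamplitude (b : Fin m → ZMod p) (hb : b ≠ 0) :
      ∃ t, IsTPlateaued p n m F b t ∧ d ^ 2 = (p ^ m - 1) ^ 2 * p ^ (n + t) := by
    obtain ⟨t, ht⟩ := hplat b hb
    have hne : walsh p n m F b 0 ≠ 0 := by
      intro h
      simpa [h, eq_comm, hd] using hW b hb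
    refine ⟨t, ht, ?_⟩
    have := congrArg (· ^ 2) (hW b hb)
    simp only [mul_pow, ht.sq_norm_walsh hne] at this
    exact_mod_cast this.symm.trans (mul_comm _ _)
  have : Fact p.Prime := ⟨hp⟩
  obtain ⟨t, -, hdt⟩ := hamplitude (Pi.single ⟨0, Nat.pos_of_ne_zero hm⟩ 1) (by simp)
  obtain ⟨heven, hdeq⟩ := hp.even_and_eq_mul_pow_half_of_sq_eq hu hdt
  refine ⟨t, heven, fun b hb => ?_, Nat.le_of_pow_dvd_pow_sub_one_mul_pow hp.one_lt (hdeq ▸ hdvd)⟩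
  obtain ⟨s, hs, hds⟩ := hamplitude b hb
  have hst : n + s = n + t := Nat.pow_right_injective hp.two_le
    (Nat.eq_of_mul_eq_mul_left (by positivity) (hds.symm.trans hdt))
  rwa [← Nat.add_left_cancel hst]

theorem almostBalanced_plateaued_single_amplitude (p n m : ℕ) [NeZero p] (hp : p.Prime)
    (hn : 0 < n) (hm : 0 < m)
    (F : (Fin n → ZMod p) → (Fin m → ZMod p))
    (hsurj : Function.Surjective F)
    (hab : IsAlmostBalanced p n m F)
    (hplat : IsPlateaued p n m F) :
    ∃ t : ℕ, Even (n + t) ∧ (∀ b : Fin m → ZMod p, b ≠ 0 → IsTPlateaued p n m F b t) ∧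
      m ≤ (n + t) / 2 :=
  almostBalanced_plateaued_single_amplitude_general p n m hp F hsurj hab hplat
end

section
/- Let p be a prime, n, m positive integers, and F : 𝔽_p^n → 𝔽_p^m a function. If Nb_F < p^{2(n−m)}/(1 − p^{−m}), then F is surjective. -/
/-!
Expanding `|W_F(b,0)|²` as a double sum over `x, y` and summing over `b`, orthogonality of the
characters `b ↦ exp(2πi⟨b, u⟩/p)` leaves only the pairs with `F x = F y`, so
`∑_b |W_F(b,0)|² = p^m ∑_β N_β²` with `N_β = #F⁻¹(β)`. The term `b = 0` equals `p^{2n}`,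
hence `Nb_F = ∑_β N_β² - p^{2n-m}`. If some `β₀` is not a value of `F`, Cauchy–Schwarz over the
remaining `p^m - 1` fibres gives `∑_β N_β² ≥ p^{2n}/(p^m - 1)`, which is exactly
`Nb_F ≥ p^{2(n-m)}/(1 - p^{-m})`.
-/

open Finset

open scoped Matrix

lemma Fintype.sum_card_filter_apply_eq_apply {α β : Type*} [Fintype α] [Fintype β]
    [DecidableEq β] (f : α → β) :
    ∑ x, #{y | f x = f y} = ∑ b, #{x | f x = b} ^ 2 := by
  rw [← Finset.sum_fiberwise univ f]
  refine Finset.sum_congr rfl fun b _ => ?_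
  rw [Finset.sum_congr rfl fun x hx => by rw [(mem_filter.mp hx).2], sum_const, smul_eq_mul, sq]
  simp only [eq_comm (a := b)]

lemma Fintype.one_lt_card_of_not_surjective {α β : Type*} [Nonempty α] [Fintype β] {f : α → β}
    (hf : ¬ Function.Surjective f) : 1 < Fintype.card β := by
  obtain ⟨b, hb⟩ := not_forall.mp hf
  obtain ⟨a⟩ := ‹Nonempty α›
  exact Fintype.one_lt_card_iff.mpr ⟨f a, b, fun h => hb ⟨a, h⟩⟩

lemma Fintype.card_sq_le_of_not_surjective {α β : Type*} [Fintype α] [Fintype β] [DecidableEq β]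
    {f : α → β}
    (hf : ¬ Function.Surjective f) :
    (Fintype.card α : ℝ) ^ 2 ≤ (Fintype.card β - 1) * ∑ b, (#{x | f x = b} : ℝ) ^ 2 := by
  obtain ⟨b₀, hb₀⟩ := not_forall.mp hf
  have hcard : Fintype.card α = ∑ b ∈ univ.erase b₀, #{x | f x = b} :=
    card_eq_sum_card_fiberwise fun x _ => mem_erase.mpr ⟨fun h => hb₀ ⟨x, h⟩, mem_univ _⟩
  calc (Fintype.card α : ℝ) ^ 2 = (∑ b ∈ univ.erase b₀, (#{x | f x = b} : ℝ)) ^ 2 := by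
        rw [hcard, Nat.cast_sum]
    _ ≤ #(univ.erase b₀) * ∑ b ∈ univ.erase b₀, (#{x | f x = b} : ℝ) ^ 2 :=
        sq_sum_le_card_mul_sum_sq
    _ ≤ #(univ.erase b₀) * ∑ b, (#{x | f x = b} : ℝ) ^ 2 := by
        gcongr
        exact subset_univ _
    _ = (Fintype.card β - 1) * ∑ b, (#{x | f x = b} : ℝ) ^ 2 := by
        rw [card_erase_of_mem (mem_univ b₀), card_univ,
          Nat.cast_pred (Fintype.card_pos_iff.mpr ⟨b₀⟩)]

namespace ZMod

variable {p : ℕ} [NeZero p]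

lemma exp_val_eq_stdAddChar (z : ZMod p) :
    Complex.exp (2 * Real.pi * Complex.I * ((z.val : ℤ) : ℂ) / p) = stdAddChar z := by
  rw [← stdAddChar_coe, Int.cast_natCast, natCast_zmod_val]

variable {α ι : Type*} [Fintype α] [Fintype ι]

lemma sum_stdAddChar_dotProduct [DecidableEq ι] (u : ι → ZMod p) :
    ∑ b : ι → ZMod p, stdAddChar (u ⬝ᵥ b) =
      if u = 0 then (p : ℂ) ^ Fintype.card ι else 0 := by
  let χ : AddChar (ι → ZMod p) ℂ :=
    (stdAddChar (N := p)).compAddMonoidHom (dotProductBilin (ZMod p) (ZMod p) u).toAddMonoidHom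
  have hχ : χ = 0 ↔ u = 0 := by
    rw [← dotProduct_eq_zero_iff, AddChar.eq_zero_iff]
    refine forall_congr' fun b => ?_
    rw [← (stdAddChar (N := p)).map_zero_eq_one]
    exact injective_stdAddChar.eq_iff
  classical
  change ∑ b, χ b = _
  rw [AddChar.sum_eq_ite]
  by_cases hu : u = 0 <;> simp [hu, hχ, ZMod.card]

lemma sq_norm_sum_stdAddChar_dotProduct (f : α → ι → ZMod p) (b : ι → ZMod p) :
    (‖∑ x, stdAddChar (b ⬝ᵥ f x)‖ ^ 2 : ℂ) = ∑ x, ∑ y, stdAddChar ((f x - f y) ⬝ᵥ b) := by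
  rw [← Complex.mul_conj', map_sum, sum_mul_sum]
  refine sum_congr rfl fun x _ => sum_congr rfl fun y _ => ?_
  rw [← AddChar.map_neg_eq_conj, ← AddChar.map_add_eq_mul, sub_dotProduct,
    dotProduct_comm (f x), dotProduct_comm (f y), sub_eq_add_neg]

lemma sum_sq_norm_sum_stdAddChar_dotProduct [DecidableEq ι] (f : α → ι → ZMod p) :
    ∑ b : ι → ZMod p, ‖∑ x, stdAddChar (b ⬝ᵥ f x)‖ ^ 2 =
      (p : ℝ) ^ Fintype.card ι * ∑ β, (#{x | f x = β} : ℝ) ^ 2 := by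
  apply Complex.ofReal_injective
  push_cast
  simp_rw [sq_norm_sum_stdAddChar_dotProduct]
  rw [sum_comm]
  simp_rw [sum_comm (γ := ι → ZMod p), sum_stdAddChar_dotProduct, sub_eq_zero, ← sum_filter,
    sum_const, nsmul_eq_mul, ← sum_mul, ← Nat.cast_sum, Fintype.sum_card_filter_apply_eq_apply,
    mul_comm]
  norm_cast

end ZMod

section Walsh

variable {p n m : ℕ} [NeZero p] (F : (Fin n → ZMod p) → (Fin m → ZMod p))

lemma walsh_zero_right (b : Fin m → ZMod p) :
    walsh p n m F b 0 = ∑ x, ZMod.stdAddChar (b ⬝ᵥ F x) := by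
  simp only [walsh, Pi.zero_apply, zero_mul, sum_const_zero, sub_zero,
    ZMod.exp_val_eq_stdAddChar]
  rfl

lemma walsh_zero_zero : walsh p n m F 0 0 = (p : ℂ) ^ n := by
  simp [walsh_zero_right, ZMod.card]

lemma sum_sq_norm_walsh_zero_right :
    ∑ b, ‖walsh p n m F b 0‖ ^ 2 = (p : ℝ) ^ m * ∑ β, (fiberCard p n m F β : ℝ) ^ 2 := by
  simpa [walsh_zero_right, fiberCard] using ZMod.sum_sq_norm_sum_stdAddChar_dotProduct F

lemma imbalance_eq_sum_sq_fiberCard_sub :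
    imbalance p n m F =
      ∑ β, (fiberCard p n m F β : ℝ) ^ 2 - ((p : ℝ) ^ n) ^ 2 / (p : ℝ) ^ m := by
  have hp : (p : ℝ) ≠ 0 := NeZero.ne _
  rw [imbalance, filter_ne' univ 0, sum_erase_eq_sub (mem_univ 0),
    sum_sq_norm_walsh_zero_right, walsh_zero_zero, norm_pow, Complex.norm_natCast]
  field_simp

end Walsh

lemma zpow_two_mul_sub_div_one_sub_inv_pow {x : ℝ} (hx : x ≠ 0) (n m : ℕ) (hxm : x ^ m ≠ 1) :
    x ^ (2 * ((n : ℤ) - m)) / (1 - (x ^ m)⁻¹) =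
      (x ^ n) ^ 2 / (x ^ m - 1) - (x ^ n) ^ 2 / x ^ m := by
  have hxm' : x ^ m - 1 ≠ 0 := sub_ne_zero.mpr hxm
  rw [show 2 * ((n : ℤ) - m) = ((2 * n : ℕ) : ℤ) - ((2 * m : ℕ) : ℤ) by push_cast; ring,
    zpow_sub₀ hx, zpow_natCast, zpow_natCast, pow_mul', pow_mul']
  field_simp
  ring

theorem surjective_of_imbalance_lt_general (p n m : ℕ) [NeZero p]
    (F : (Fin n → ZMod p) → (Fin m → ZMod p))
    (h : imbalance p n m F < (p : ℝ) ^ (2 * ((n : ℤ) - (m : ℤ))) / (1 - ((p : ℝ) ^ m)⁻¹)) :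
    Function.Surjective F := by
  by_contra hF
  have hcard (k : ℕ) : (Fintype.card (Fin k → ZMod p) : ℝ) = (p : ℝ) ^ k := by
    simp [ZMod.card]
  have hB : (1 : ℝ) < p ^ m := by
    rw [← hcard]; exact_mod_cast Fintype.one_lt_card_of_not_surjective hF
  have hCS := Fintype.card_sq_le_of_not_surjective hF
  rw [hcard, hcard] at hCS
  rw [imbalance_eq_sum_sq_fiberCard_sub,
    zpow_two_mul_sub_div_one_sub_inv_pow (NeZero.ne _) n m hB.ne', sub_lt_sub_iff_right,
    lt_div_iff₀ (by linarith)] at h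
  exact h.not_ge (by simpa [mul_comm, fiberCard] using hCS)

theorem surjective_of_imbalance_lt (p n m : ℕ) [NeZero p] (hp : p.Prime)
    (hn : 0 < n) (hm : 0 < m)
    (F : (Fin n → ZMod p) → (Fin m → ZMod p))
    (h : imbalance p n m F < (p : ℝ) ^ (2 * ((n : ℤ) - (m : ℤ))) / (1 - ((p : ℝ) ^ m)⁻¹)) :
    Function.Surjective F :=
  surjective_of_imbalance_lt_general p n m F h
end
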